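/- arXiv:1004.1905 — 5 statements merged into one kernel-verified Lean document; each statement's English description precedes it below -/
import Mathlib

section
/- Let d ∈ {2,3}. There exists a constant C > 0 (depending only on d) such that for all complex numbers z, w: | |z|^{4/d − 4} z³ − |w|^{4/d − 4} w³ | ≤ C |z − w|^{4/d − 1}, where by convention |z|^{4/d − 4} z³ is interpreted as 0 when z = 0. -/
/-- The function `z ↦ |z|^{4/d − 4} z³`, with the convention that it equals `0` at `z = 0`. -/
noncomputable def nlinFactor3 (d : ℕ) (z : ℂ) : ℂ :=
  if z = 0 then 0 else ((‖z‖ ^ ((4 : ℝ) / d - 4) : ℝ) : ℂ) * z ^ 3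


/-- MVT bound for negative powers. -/
lemma rpow_sub_rpow_le_aux {s a b : ℝ} (hs : s ≤ 0) (hb : 0 < b) (hba : b ≤ a) :
    b ^ s - a ^ s ≤ (-s) * b ^ (s - 1) * (a - b) := by
  rcases eq_or_lt_of_le hba with rfl | hlt
  · simp
  · have ha : 0 < a := hb.trans hlt
    have hcont : ContinuousOn (fun x : ℝ => x ^ s) (Set.Icc b a) := by
      intro x hx
      exact (Real.continuousAt_rpow_const x s (Or.inl (hb.trans_le hx.1).ne')).continuousWithinAt
    have hderiv : ∀ x ∈ Set.Ioo b a, HasDerivAt (fun x : ℝ => x ^ s) (s * x ^ (s - 1)) x := by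
      intro x hx
      exact Real.hasDerivAt_rpow_const (Or.inl (hb.trans hx.1).ne')
    obtain ⟨c, hc, hceq⟩ := exists_hasDerivAt_eq_slope (fun x : ℝ => x ^ s)
      (fun x => s * x ^ (s - 1)) hlt hcont hderiv
    have hcb : b < c := hc.1
    have hcpos : 0 < c := hb.trans hcb
    have h1 : b ^ s - a ^ s = (-s) * c ^ (s - 1) * (a - b) := by
      have : s * c ^ (s - 1) * (a - b) = a ^ s - b ^ s := by
        rw [hceq, div_mul_eq_mul_div, mul_div_assoc, div_self (sub_ne_zero.2 hlt.ne'), mul_one]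
      nlinarith [this]
    rw [h1]
    have h2 : c ^ (s - 1) ≤ b ^ (s - 1) :=
      Real.rpow_le_rpow_of_nonpos hb hcb.le (by linarith)
    have hns : 0 ≤ -s := by linarith
    have hab : 0 ≤ a - b := by linarith
    exact mul_le_mul_of_nonneg_right (mul_le_mul_of_nonneg_left h2 hns) hab

lemma norm_val_aux {α : ℝ} (z : ℂ) (hz : z ≠ 0) :
    ‖((‖z‖ ^ (α - 3) : ℝ) : ℂ) * z ^ 3‖ = ‖z‖ ^ α := by
  have hz0 : (0:ℝ) < ‖z‖ := norm_pos_iff.2 hz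
  rw [norm_mul, Complex.norm_real, Real.norm_of_nonneg (Real.rpow_nonneg hz0.le _), norm_pow,
    ← Real.rpow_natCast ‖z‖ 3, ← Real.rpow_add hz0]
  norm_num

lemma holder_aux {α : ℝ} (hα0 : 0 < α) (hα1 : α ≤ 1) (z w : ℂ) (hzw : ‖w‖ ≤ ‖z‖) :
    ‖(if z = 0 then 0 else ((‖z‖ ^ (α - 3) : ℝ) : ℂ) * z ^ 3) -
      (if w = 0 then 0 else ((‖w‖ ^ (α - 3) : ℝ) : ℂ) * w ^ 3)‖ ≤ 9 * ‖z - w‖ ^ α := by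
  by_cases hw : w = 0
  · subst hw
    by_cases hz : z = 0
    · subst hz; simp; positivity
    · rw [if_neg hz, if_pos rfl, sub_zero, sub_zero, norm_val_aux z hz]
      nlinarith [Real.rpow_nonneg (norm_nonneg z) α]
  · have hz : z ≠ 0 := by
      intro h
      exact hw (norm_le_zero_iff.1 (by simpa [h] using hzw))
    by_cases hzw0 : z = w
    · subst hzw0; simp; positivity
    · have ha : (0:ℝ) < ‖z‖ := norm_pos_iff.2 hz
      have hb : (0:ℝ) < ‖w‖ := norm_pos_iff.2 hw
      have hr : (0:ℝ) < ‖z - w‖ := norm_pos_iff.2 (sub_ne_zero.2 hzw0)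
      set a := ‖z‖ with ha'
      set b := ‖w‖ with hb'
      set r := ‖z - w‖ with hr'
      rw [if_neg hz, if_neg hw]
      have hrα : (0:ℝ) ≤ r ^ α := Real.rpow_nonneg hr.le α
      rcases le_total a (2 * r) with hcase | hcase
      · calc ‖((a ^ (α - 3) : ℝ) : ℂ) * z ^ 3 - ((b ^ (α - 3) : ℝ) : ℂ) * w ^ 3‖
            ≤ ‖((a ^ (α - 3) : ℝ) : ℂ) * z ^ 3‖ + ‖((b ^ (α - 3) : ℝ) : ℂ) * w ^ 3‖ :=
              norm_sub_le _ _
          _ = a ^ α + b ^ α := by rw [norm_val_aux z hz, norm_val_aux w hw]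
          _ ≤ a ^ α + a ^ α := by
              have := Real.rpow_le_rpow hb.le hzw hα0.le
              linarith
          _ = 2 * a ^ α := by ring
          _ ≤ 2 * (2 * r) ^ α := by
              have := Real.rpow_le_rpow ha.le hcase hα0.le
              linarith
          _ = 2 * (2 ^ α * r ^ α) := by rw [Real.mul_rpow (by norm_num) hr.le]
          _ ≤ 9 * r ^ α := by
              have h2 : (2:ℝ) ^ α ≤ 2 ^ (1:ℝ) :=
                Real.rpow_le_rpow_of_exponent_le one_le_two hα1
              rw [Real.rpow_one] at h2
              nlinarith
      · have hba : b ≤ a := hzw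
        have habr : a - b ≤ r := by
          simpa using norm_sub_norm_le z w
        have hb2 : a / 2 ≤ b := by linarith
        have hra : r ≤ a := by linarith
        -- key scalar inequality
        have key : a ^ (α - 1) * r ≤ r ^ α := by
          have h1 : r = r ^ (1 - α) * r ^ α := by
            rw [← Real.rpow_add hr]; norm_num
          have h2 : r ^ (1 - α) ≤ a ^ (1 - α) := Real.rpow_le_rpow hr.le hra (by linarith)
          have h3 : a ^ (α - 1) * a ^ (1 - α) = 1 := by
            rw [← Real.rpow_add ha]; norm_num
          have h4 : (0:ℝ) ≤ a ^ (α - 1) := Real.rpow_nonneg ha.le _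
          calc a ^ (α - 1) * r = a ^ (α - 1) * (r ^ (1 - α) * r ^ α) := by
                conv_lhs => rw [h1]
            _ = a ^ (α - 1) * r ^ (1 - α) * r ^ α := by ring
            _ ≤ a ^ (α - 1) * a ^ (1 - α) * r ^ α := by
                apply mul_le_mul_of_nonneg_right _ hrα
                exact mul_le_mul_of_nonneg_left h2 h4
            _ = r ^ α := by rw [h3, one_mul]
        -- decomposition
        have hdec : ((a ^ (α - 3) : ℝ) : ℂ) * z ^ 3 - ((b ^ (α - 3) : ℝ) : ℂ) * w ^ 3
            = ((a ^ (α - 3) : ℝ) : ℂ) * (z ^ 3 - w ^ 3)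
              + (((a ^ (α - 3) - b ^ (α - 3) : ℝ)) : ℂ) * w ^ 3 := by
          push_cast; ring
        have h3a : (0:ℝ) ≤ a ^ (α - 3) := Real.rpow_nonneg ha.le _
        have hcube : ‖z ^ 3 - w ^ 3‖ ≤ 3 * a ^ 2 * r := by
          have hid : z ^ 3 - w ^ 3 = (z - w) * (z ^ 2 + z * w + w ^ 2) := by ring
          rw [hid, norm_mul]
          have h5 : ‖z ^ 2 + z * w + w ^ 2‖ ≤ 3 * a ^ 2 := by
            calc ‖z ^ 2 + z * w + w ^ 2‖ ≤ ‖z ^ 2 + z * w‖ + ‖w ^ 2‖ := norm_add_le _ _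
              _ ≤ ‖z ^ 2‖ + ‖z * w‖ + ‖w ^ 2‖ := by linarith [norm_add_le (z ^ 2) (z * w)]
              _ = a ^ 2 + a * b + b ^ 2 := by rw [norm_pow, norm_mul, norm_pow]
              _ ≤ 3 * a ^ 2 := by nlinarith
          calc ‖z - w‖ * ‖z ^ 2 + z * w + w ^ 2‖ ≤ r * (3 * a ^ 2) :=
                mul_le_mul_of_nonneg_left h5 hr.le
            _ = 3 * a ^ 2 * r := by ring
        have hfirst : ‖((a ^ (α - 3) : ℝ) : ℂ) * (z ^ 3 - w ^ 3)‖ ≤ 3 * (a ^ (α - 1)) * r := by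
          rw [norm_mul, Complex.norm_real, Real.norm_of_nonneg h3a]
          calc a ^ (α - 3) * ‖z ^ 3 - w ^ 3‖ ≤ a ^ (α - 3) * (3 * a ^ 2 * r) :=
                mul_le_mul_of_nonneg_left hcube h3a
            _ = 3 * (a ^ (α - 3) * a ^ ((2:ℕ) : ℝ)) * r := by
                rw [Real.rpow_natCast]; ring
            _ = 3 * (a ^ (α - 1)) * r := by
                have : a ^ (α - 3) * a ^ ((2:ℕ):ℝ) = a ^ (α - 1) := by
                  rw [← Real.rpow_add ha]; ring_nf
                rw [this]
        have hmvt : |a ^ (α - 3) - b ^ (α - 3)| ≤ (3 - α) * b ^ (α - 4) * r := by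
          have hle : a ^ (α - 3) ≤ b ^ (α - 3) :=
            Real.rpow_le_rpow_of_nonpos hb hba (by linarith)
          rw [abs_sub_comm, abs_of_nonneg (by linarith)]
          have := rpow_sub_rpow_le_aux (s := α - 3) (a := a) (b := b) (by linarith) hb hba
          have h6 : (0:ℝ) ≤ (3 - α) * b ^ (α - 4) := by
            have := Real.rpow_nonneg hb.le (α - 4)
            nlinarith
          calc b ^ (α - 3) - a ^ (α - 3) ≤ -(α - 3) * b ^ (α - 3 - 1) * (a - b) := this
            _ = (3 - α) * b ^ (α - 4) * (a - b) := by
                have : α - 3 - 1 = α - 4 := by ring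
                rw [this]; ring
            _ ≤ (3 - α) * b ^ (α - 4) * r := mul_le_mul_of_nonneg_left habr h6
        have hsecond : ‖(((a ^ (α - 3) - b ^ (α - 3) : ℝ)) : ℂ) * w ^ 3‖
            ≤ (3 - α) * b ^ (α - 1) * r := by
          rw [norm_mul, Complex.norm_real, norm_pow, Real.norm_eq_abs]
          calc |a ^ (α - 3) - b ^ (α - 3)| * b ^ 3
              ≤ ((3 - α) * b ^ (α - 4) * r) * b ^ 3 := by
                apply mul_le_mul_of_nonneg_right hmvt (by positivity)
            _ = (3 - α) * (b ^ (α - 4) * b ^ ((3:ℕ) : ℝ)) * r := by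
                rw [Real.rpow_natCast]; ring
            _ = (3 - α) * b ^ (α - 1) * r := by
                have : b ^ (α - 4) * b ^ ((3:ℕ):ℝ) = b ^ (α - 1) := by
                  rw [← Real.rpow_add hb]; ring_nf
                rw [this]
        have hbb : b ^ (α - 1) ≤ 2 * a ^ (α - 1) := by
          have h7 : b ^ (α - 1) ≤ (a / 2) ^ (α - 1) :=
            Real.rpow_le_rpow_of_nonpos (by linarith) hb2 (by linarith)
          have h8 : (a / 2 : ℝ) ^ (α - 1) = a ^ (α - 1) / 2 ^ (α - 1) :=
            Real.div_rpow ha.le (by norm_num : (0:ℝ) ≤ 2) (α - 1)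
          have h9 : (2:ℝ) ^ (-1 : ℝ) ≤ 2 ^ (α - 1) :=
            Real.rpow_le_rpow_of_exponent_le one_le_two (by linarith)
          have h10 : (2:ℝ) ^ (-1 : ℝ) = 1 / 2 := by
            rw [Real.rpow_neg_one]; norm_num
          rw [h10] at h9
          have h11 : a ^ (α - 1) / 2 ^ (α - 1) ≤ a ^ (α - 1) / (1 / 2) := by
            apply div_le_div_of_nonneg_left (Real.rpow_nonneg ha.le _) (by norm_num) h9
          have h12 : a ^ (α - 1) / (1 / 2) = 2 * a ^ (α - 1) := by ring
          rw [h12] at h11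
          rw [h8] at h7
          linarith
        have haα : (0:ℝ) ≤ a ^ (α - 1) := Real.rpow_nonneg ha.le _
        calc ‖((a ^ (α - 3) : ℝ) : ℂ) * z ^ 3 - ((b ^ (α - 3) : ℝ) : ℂ) * w ^ 3‖
            ≤ ‖((a ^ (α - 3) : ℝ) : ℂ) * (z ^ 3 - w ^ 3)‖
              + ‖(((a ^ (α - 3) - b ^ (α - 3) : ℝ)) : ℂ) * w ^ 3‖ := by
              rw [hdec]; exact norm_add_le _ _
          _ ≤ 3 * (a ^ (α - 1)) * r + (3 - α) * b ^ (α - 1) * r := add_le_add hfirst hsecond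
          _ ≤ 9 * (a ^ (α - 1) * r) := by
              have hy : (0:ℝ) ≤ b ^ (α - 1) := Real.rpow_nonneg hb.le _
              have hyr : (0:ℝ) ≤ b ^ (α - 1) * r := mul_nonneg hy hr.le
              have hyx : b ^ (α - 1) * r ≤ 2 * a ^ (α - 1) * r :=
                mul_le_mul_of_nonneg_right hbb hr.le
              nlinarith
          _ ≤ 9 * r ^ α := by linarith


/-- For `d ∈ {2,3}` there is `C > 0` depending only on `d` such that for all `z w : ℂ`,
`| |z|^{4/d−4} z³ − |w|^{4/d−4} w³ | ≤ C |z − w|^{4/d − 1}` (with the convention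
that `|z|^{4/d−4} z³ = 0` when `z = 0`). -/
theorem nlinFactor3_sub_le (d : ℕ) (hd : d = 2 ∨ d = 3) :
    ∃ C : ℝ, 0 < C ∧ ∀ z w : ℂ,
      ‖nlinFactor3 d z - nlinFactor3 d w‖ ≤ C * ‖z - w‖ ^ ((4 : ℝ) / d - 1) := by
  set α : ℝ := (4 : ℝ) / d - 1 with hα
  have hα0 : 0 < α := by rcases hd with rfl | rfl <;> norm_num [hα]
  have hα1 : α ≤ 1 := by rcases hd with rfl | rfl <;> norm_num [hα]
  have hexp : (4 : ℝ) / d - 4 = α - 3 := by rw [hα]; ring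
  have hform : ∀ z : ℂ, nlinFactor3 d z =
      if z = 0 then 0 else ((‖z‖ ^ (α - 3) : ℝ) : ℂ) * z ^ 3 := by
    intro z; rw [nlinFactor3, hexp]
  refine ⟨9, by norm_num, fun z w => ?_⟩
  rw [hform z, hform w]
  rcases le_total ‖w‖ ‖z‖ with h | h
  · exact holder_aux hα0 hα1 z w h
  · rw [norm_sub_rev, norm_sub_rev z w]
    exact holder_aux hα0 hα1 w z h
end

section
/- Let d ∈ {2,3}. There exists a constant C > 0 (depending only on d and the ambient dimension n) such that for all bounded continuously differentiable functions u, v : ℝⁿ → ℂ with bounded derivatives and every coordinate direction i: ‖∂_i(|u|^{4/d} u) − ∂_i(|v|^{4/d} v)‖_{L²(ℝⁿ)} ≤ C [ ‖∂_i(u − v)‖_{L²(ℝⁿ)} ‖u‖_{L^∞}^{4/d} + ‖∂_i v‖_{L²(ℝⁿ)} ‖u − v‖_{L^∞} (‖u‖_{L^∞} + ‖v‖_{L^∞})^{4/d − 1} ], where norms on the left and the L² norms on the right are allowed to be +∞. -/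
/-!
With `p = 4 / d ∈ (1, 2]` and `ℂ` viewed as a real inner product space, the chain rule gives
`∂ᵢ(‖u‖ ^ p • u) = DF(u) ∂ᵢu`, where `DF(z) w = ‖z‖ ^ p • w + p ‖z‖ ^ (p - 2) ⟪z, w⟫ • z` is
`normRpowSMulDeriv p z`. Splitting
`DF(u) ∂ᵢu - DF(v) ∂ᵢv = DF(u) ∂ᵢ(u - v) + (DF(u) - DF(v)) ∂ᵢv`,
the bounds `‖DF(z)‖ ≤ (1 + p) ‖z‖ ^ p` and `‖DF(z) - DF(z')‖ ≤ 4p (‖z‖ + ‖z'‖) ^ (p - 1) ‖z - z'‖`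
control the integrand pointwise; `u`, `v` and `u - v` are bounded a.e. by their essential suprema,
and Minkowski's inequality in `L²` finishes.
-/

open MeasureTheory
open scoped ENNReal

namespace Real

lemma rpow_sub_two_mul_sq {s : ℝ} (hs : 0 ≤ s) {p : ℝ} (hp : p ≠ 0) :
    s ^ (p - 2) * s ^ 2 = s ^ p := by
  rw [← rpow_natCast, ← rpow_add' hs (by simpa using hp)]
  norm_num

/-- By convexity of `s ↦ s ^ p`, the slope of a chord ending at `t` is at most the derivative
at `t`. -/
lemma abs_rpow_sub_rpow_le {p s t : ℝ} (hp : 1 ≤ p) (hs : 0 ≤ s) (hst : s ≤ t) :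
    |s ^ p - t ^ p| ≤ p * t ^ (p - 1) * (t - s) := by
  rcases hst.eq_or_lt with rfl | hst
  · simp
  have hslope := (convexOn_rpow hp).slope_le_of_hasDerivAt hs (hs.trans hst.le) hst
    (hasDerivAt_rpow_const (Or.inr hp))
  rw [slope_def_field, div_le_iff₀ (sub_pos.2 hst)] at hslope
  rw [abs_sub_comm, abs_of_nonneg (sub_nonneg.2 (rpow_le_rpow hs hst.le (by linarith)))]
  exact hslope

lemma abs_rpow_sub_two_sub_rpow_sub_two_mul_sq_le {p s t : ℝ} (hp1 : 1 ≤ p) (hp2 : p ≤ 2)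
    (hs : 0 ≤ s) (hst : s ≤ t) :
    |(s ^ (p - 2) - t ^ (p - 2)) * s ^ 2| ≤ t ^ (p - 1) * (t - s) := by
  rcases hs.eq_or_lt with rfl | hs
  · simp [mul_nonneg, rpow_nonneg, hst]
  have ht := hs.trans_le hst
  have hsp : s ^ (p - 2) * s ^ 2 = s ^ p := rpow_sub_two_mul_sq hs.le (by linarith)
  have hmono : t ^ (p - 2) ≤ s ^ (p - 2) := rpow_le_rpow_of_nonpos hs hst (by linarith)
  have hst' : s ^ p ≤ t ^ (p - 1) * s := by
    calc s ^ p = s ^ (p - 1) * s := by rw [← rpow_add_one hs.ne']; ring_nf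
      _ ≤ t ^ (p - 1) * s := by gcongr
  have htt : t ^ (p - 2) * t = t ^ (p - 1) := by rw [← rpow_add_one ht.ne']; ring_nf
  have ht2 : 0 ≤ t ^ (p - 2) := rpow_nonneg ht.le _
  rw [sub_mul, hsp, abs_le]
  constructor
  · nlinarith [mul_le_mul_of_nonneg_right hmono (sq_nonneg s), rpow_nonneg ht.le (p - 1)]
  · rw [← htt] at hst' ⊢
    nlinarith [mul_nonneg ht2 (sq_nonneg (t - s))]

end Real

open Real

section NormRpowSMul

variable {E : Type*} [NormedAddCommGroup E] [InnerProductSpace ℝ E] {p : ℝ}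

noncomputable def normRpowSMulDeriv (p : ℝ) (x : E) : E →L[ℝ] E :=
  ‖x‖ ^ p • ContinuousLinearMap.id ℝ E + ((p * ‖x‖ ^ (p - 2)) • innerSL ℝ x).smulRight x

lemma normRpowSMulDeriv_apply (x w : E) :
    normRpowSMulDeriv p x w = ‖x‖ ^ p • w + (p * ‖x‖ ^ (p - 2) * inner ℝ x w) • x := by
  simp [normRpowSMulDeriv, mul_assoc]

lemma normRpowSMulDeriv_sub_apply (x y w : E) :
    (normRpowSMulDeriv p x - normRpowSMulDeriv p y) w
      = (‖x‖ ^ p - ‖y‖ ^ p) • w + (p * ((‖x‖ ^ (p - 2) - ‖y‖ ^ (p - 2)) * inner ℝ x w)) • x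
        + (p * ‖y‖ ^ (p - 2)) • (inner ℝ (x - y) w • x + inner ℝ y w • (x - y)) := by
  rw [sub_apply, normRpowSMulDeriv_apply, normRpowSMulDeriv_apply, inner_sub_left]
  module

lemma hasFDerivAt_norm_rpow_smul (x : E) (hp : 1 < p) :
    HasFDerivAt (fun y : E ↦ ‖y‖ ^ p • y) (normRpowSMulDeriv p x) x :=
  (hasFDerivAt_norm_rpow x hp).smul (hasFDerivAt_id x)

lemma DifferentiableAt.fderiv_norm_rpow_smul {F : Type*} [NormedAddCommGroup F]
    [NormedSpace ℝ F] {f : F → E} {x : F} (hf : DifferentiableAt ℝ f x) (hp : 1 < p) :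
    fderiv ℝ (fun y ↦ ‖f y‖ ^ p • f y) x = (normRpowSMulDeriv p (f x)).comp (fderiv ℝ f x) :=
  ((hasFDerivAt_norm_rpow_smul (f x) hp).comp x hf.hasFDerivAt).fderiv

lemma norm_normRpowSMulDeriv_le (hp : 0 < p) (x : E) :
    ‖normRpowSMulDeriv p x‖ ≤ (1 + p) * ‖x‖ ^ p := by
  refine ContinuousLinearMap.opNorm_le_bound _ (by positivity) fun w ↦ ?_
  rw [normRpowSMulDeriv_apply]
  calc ‖‖x‖ ^ p • w + (p * ‖x‖ ^ (p - 2) * inner ℝ x w) • x‖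
      ≤ ‖x‖ ^ p * ‖w‖ + p * ‖x‖ ^ (p - 2) * (‖x‖ * ‖w‖) * ‖x‖ := by
        refine (norm_add_le _ _).trans (add_le_add ?_ ?_) <;> rw [norm_smul, Real.norm_eq_abs]
        · rw [abs_of_nonneg (by positivity)]
        · rw [abs_mul, abs_of_nonneg (by positivity)]
          gcongr
          exact abs_real_inner_le_norm x w
    _ = (1 + p) * ‖x‖ ^ p * ‖w‖ := by
        rw [← rpow_sub_two_mul_sq (norm_nonneg x) hp.ne']
        ring

lemma norm_normRpowSMulDeriv_sub_le_of_norm_le (hp1 : 1 ≤ p) (hp2 : p ≤ 2) {x y : E}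
    (hxy : ‖x‖ ≤ ‖y‖) :
    ‖normRpowSMulDeriv p x - normRpowSMulDeriv p y‖ ≤ 4 * p * ‖y‖ ^ (p - 1) * ‖x - y‖ := by
  rcases (norm_nonneg y).eq_or_lt with hy | hy
  · obtain rfl : y = 0 := norm_eq_zero.1 hy.symm
    obtain rfl : x = 0 := norm_le_zero_iff.1 (hy ▸ hxy)
    simp
  set s := ‖x‖
  set t := ‖y‖
  have hts : t - s ≤ ‖x - y‖ := by simpa [norm_sub_rev] using norm_sub_norm_le y x
  have htt : t ^ (p - 2) * t = t ^ (p - 1) := by rw [← rpow_add_one hy.ne']; ring_nf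
  refine ContinuousLinearMap.opNorm_le_bound _ (by positivity) fun w ↦ ?_
  rw [normRpowSMulDeriv_sub_apply]
  refine (norm_add₃_le ..).trans ?_
  have h₁ : ‖(s ^ p - t ^ p) • w‖ ≤ p * t ^ (p - 1) * ‖x - y‖ * ‖w‖ := by
    rw [norm_smul, Real.norm_eq_abs]
    gcongr
    exact (abs_rpow_sub_rpow_le hp1 (norm_nonneg x) hxy).trans (by gcongr)
  have h₂ : ‖(p * ((s ^ (p - 2) - t ^ (p - 2)) * inner ℝ x w)) • x‖
      ≤ p * t ^ (p - 1) * ‖x - y‖ * ‖w‖ := by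
    calc _ ≤ p * |(s ^ (p - 2) - t ^ (p - 2)) * s ^ 2| * ‖w‖ := by
          have hinner := abs_real_inner_le_norm x w
          rw [norm_smul, Real.norm_eq_abs, abs_mul, abs_mul, abs_mul, abs_of_nonneg (by linarith),
            abs_of_nonneg (sq_nonneg s)]
          calc _ ≤ p * (|s ^ (p - 2) - t ^ (p - 2)| * (s * ‖w‖)) * s := by gcongr
            _ = _ := by ring
      _ ≤ p * (t ^ (p - 1) * ‖x - y‖) * ‖w‖ := by
          gcongr
          exact (abs_rpow_sub_two_sub_rpow_sub_two_mul_sq_le hp1 hp2 (norm_nonneg x) hxy).trans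
            (by gcongr)
      _ = _ := by ring
  have h₃ : ‖(p * t ^ (p - 2)) • (inner ℝ (x - y) w • x + inner ℝ y w • (x - y))‖
      ≤ 2 * p * t ^ (p - 1) * ‖x - y‖ * ‖w‖ := by
    calc _ ≤ p * t ^ (p - 2) * (‖x - y‖ * ‖w‖ * s + t * ‖w‖ * ‖x - y‖) := by
          rw [norm_smul, Real.norm_eq_abs, abs_of_nonneg (by positivity)]
          gcongr
          refine (norm_add_le _ _).trans (add_le_add ?_ ?_) <;> rw [norm_smul, Real.norm_eq_abs] <;>
            gcongr <;> exact abs_real_inner_le_norm _ _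
      _ ≤ p * t ^ (p - 2) * (2 * t * ‖x - y‖ * ‖w‖) := by
          gcongr
          nlinarith [mul_nonneg (norm_nonneg (x - y)) (norm_nonneg w)]
      _ = 2 * p * (t ^ (p - 2) * t) * ‖x - y‖ * ‖w‖ := by ring
      _ = _ := by rw [htt]
  linarith

lemma norm_normRpowSMulDeriv_sub_le (hp1 : 1 ≤ p) (hp2 : p ≤ 2) (x y : E) :
    ‖normRpowSMulDeriv p x - normRpowSMulDeriv p y‖
      ≤ 4 * p * (‖x‖ + ‖y‖) ^ (p - 1) * ‖x - y‖ := by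
  wlog hxy : ‖x‖ ≤ ‖y‖ generalizing x y
  · rw [norm_sub_rev, add_comm, norm_sub_rev x]
    exact this y x (le_of_not_ge hxy)
  calc _ ≤ 4 * p * ‖y‖ ^ (p - 1) * ‖x - y‖ :=
        norm_normRpowSMulDeriv_sub_le_of_norm_le hp1 hp2 hxy
    _ ≤ 4 * p * (‖x‖ + ‖y‖) ^ (p - 1) * ‖x - y‖ := by
        gcongr
        linarith [norm_nonneg x]

lemma norm_normRpowSMulDeriv_apply_sub_apply_le (hp1 : 1 ≤ p) (hp2 : p ≤ 2) (x y v w : E) :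
    ‖normRpowSMulDeriv p x v - normRpowSMulDeriv p y w‖
      ≤ 4 * p * (‖v - w‖ * ‖x‖ ^ p + ‖w‖ * ‖x - y‖ * (‖x‖ + ‖y‖) ^ (p - 1)) := by
  have hsplit : normRpowSMulDeriv p x v - normRpowSMulDeriv p y w
      = normRpowSMulDeriv p x (v - w) + (normRpowSMulDeriv p x - normRpowSMulDeriv p y) w := by
    simp only [map_sub, sub_apply]
    abel
  rw [hsplit]
  calc _ ≤ (1 + p) * ‖x‖ ^ p * ‖v - w‖ + 4 * p * (‖x‖ + ‖y‖) ^ (p - 1) * ‖x - y‖ * ‖w‖ := by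
        refine (norm_add_le _ _).trans (add_le_add ?_ ?_)
        · refine (ContinuousLinearMap.le_opNorm _ _).trans ?_
          gcongr
          exact norm_normRpowSMulDeriv_le (by linarith) x
        · refine (ContinuousLinearMap.le_opNorm _ _).trans ?_
          gcongr
          exact norm_normRpowSMulDeriv_sub_le hp1 hp2 x y
    _ ≤ 4 * p * ‖x‖ ^ p * ‖v - w‖ + 4 * p * (‖x‖ + ‖y‖) ^ (p - 1) * ‖x - y‖ * ‖w‖ := by
        gcongr
        linarith
    _ = _ := by ring

lemma enorm_normRpowSMulDeriv_apply_sub_apply_le (hp1 : 1 ≤ p) (hp2 : p ≤ 2) (x y v w : E) :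
    ‖normRpowSMulDeriv p x v - normRpowSMulDeriv p y w‖ₑ
      ≤ ENNReal.ofReal (4 * p)
        * (‖v - w‖ₑ * ‖x‖ₑ ^ p + ‖w‖ₑ * ‖x - y‖ₑ * (‖x‖ₑ + ‖y‖ₑ) ^ (p - 1)) := by
  simp only [← ofReal_norm]
  rw [ENNReal.ofReal_rpow_of_nonneg (norm_nonneg _) (by linarith),
    ← ENNReal.ofReal_add (norm_nonneg _) (norm_nonneg _),
    ENNReal.ofReal_rpow_of_nonneg (by positivity) (by linarith),
    ← ENNReal.ofReal_mul (norm_nonneg _), ← ENNReal.ofReal_mul (norm_nonneg _),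
    ← ENNReal.ofReal_mul (by positivity), ← ENNReal.ofReal_add (by positivity) (by positivity),
    ← ENNReal.ofReal_mul (by linarith)]
  exact ENNReal.ofReal_le_ofReal (norm_normRpowSMulDeriv_apply_sub_apply_le hp1 hp2 x y v w)

end NormRpowSMul

lemma eLpNorm_le_mul_mul_add_mul_of_ae_enorm_le {α E F G : Type*} [MeasurableSpace α]
    {μ : Measure α} [NormedAddCommGroup E] [NormedAddCommGroup F] [NormedAddCommGroup G]
    {f : α → E} {g₁ : α → F} {g₂ : α → G} {c a b q : ℝ≥0∞} (hq : 1 ≤ q)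
    (hg₁ : AEStronglyMeasurable g₁ μ) (hg₂ : AEStronglyMeasurable g₂ μ)
    (h : ∀ᵐ x ∂μ, ‖f x‖ₑ ≤ c * (‖g₁ x‖ₑ * a + ‖g₂ x‖ₑ * b)) :
    eLpNorm f q μ ≤ c * (eLpNorm g₁ q μ * a + eLpNorm g₂ q μ * b) := by
  have hG₁ : eLpNorm (fun x ↦ ‖g₁ x‖ₑ * a) q μ ≤ eLpNorm g₁ q μ * a := by
    rw [mul_comm]
    exact eLpNorm_le_mul_eLpNorm_of_ae_le_mul'' q hg₁ (.of_forall fun x ↦ by simp [mul_comm])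
  have hG₂ : eLpNorm (fun x ↦ ‖g₂ x‖ₑ * b) q μ ≤ eLpNorm g₂ q μ * b := by
    rw [mul_comm]
    exact eLpNorm_le_mul_eLpNorm_of_ae_le_mul'' q hg₂ (.of_forall fun x ↦ by simp [mul_comm])
  calc eLpNorm f q μ ≤ c * eLpNorm (fun x ↦ ‖g₁ x‖ₑ * a + ‖g₂ x‖ₑ * b) q μ :=
        eLpNorm_le_mul_eLpNorm_of_ae_le_mul'' q (by fun_prop) (by simpa using h)
    _ ≤ c * (eLpNorm (fun x ↦ ‖g₁ x‖ₑ * a) q μ + eLpNorm (fun x ↦ ‖g₂ x‖ₑ * b) q μ) := by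
        gcongr
        exact eLpNorm_add_le (hg₁.enorm.mul_const a).aestronglyMeasurable
          (hg₂.enorm.mul_const b).aestronglyMeasurable hq
    _ ≤ c * (eLpNorm g₁ q μ * a + eLpNorm g₂ q μ * b) := by gcongr

/-- First-derivative estimate underlying part (ii) of the nonlinear estimates lemma: for
`d ∈ {2,3}` there is `C > 0` (depending only on `d` and `n`) such that for all bounded `C¹`
functions `u v : ℝⁿ → ℂ` with bounded derivatives and every coordinate direction `i`,
`‖∂ᵢ(|u|^{4/d}u) − ∂ᵢ(|v|^{4/d}v)‖_{L²} ≤ C ( ‖∂ᵢ(u−v)‖_{L²} ‖u‖_∞^{4/d}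
  + ‖∂ᵢv‖_{L²} ‖u−v‖_∞ (‖u‖_∞ + ‖v‖_∞)^{4/d−1} )`. -/
theorem critical_nonlinearity_first_derivative_estimate (d n : ℕ) (hd : d = 2 ∨ d = 3) :
    ∃ C : ℝ, 0 < C ∧ ∀ u v : EuclideanSpace ℝ (Fin n) → ℂ,
      ContDiff ℝ 1 u → ContDiff ℝ 1 v →
      (∃ M : ℝ, ∀ x, ‖u x‖ ≤ M ∧ ‖fderiv ℝ u x‖ ≤ M) →
      (∃ M : ℝ, ∀ x, ‖v x‖ ≤ M ∧ ‖fderiv ℝ v x‖ ≤ M) →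
      ∀ i : Fin n,
      eLpNorm (fun x =>
          fderiv ℝ (fun y => ((‖u y‖ ^ ((4 : ℝ) / d) : ℝ) : ℂ) * u y) x
            (EuclideanSpace.single i 1)
          - fderiv ℝ (fun y => ((‖v y‖ ^ ((4 : ℝ) / d) : ℝ) : ℂ) * v y) x
            (EuclideanSpace.single i 1)) 2 volume
        ≤ ENNReal.ofReal C *
          (eLpNorm (fun x => fderiv ℝ (fun y => u y - v y) x (EuclideanSpace.single i 1))
              2 volume * (eLpNorm u ⊤ volume) ^ ((4 : ℝ) / d)
            + eLpNorm (fun x => fderiv ℝ v x (EuclideanSpace.single i 1)) 2 volume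
              * eLpNorm (fun x => u x - v x) ⊤ volume
              * (eLpNorm u ⊤ volume + eLpNorm v ⊤ volume) ^ ((4 : ℝ) / d - 1)) := by
  set p : ℝ := 4 / d with hp
  have hp1 : 1 < p := by rcases hd with rfl | rfl <;> norm_num [hp]
  have hp2 : p ≤ 2 := by rcases hd with rfl | rfl <;> norm_num [hp]
  refine ⟨4 * p, by positivity, fun u v hu hv _ _ i ↦ ?_⟩
  have hud : Differentiable ℝ u := hu.differentiable one_ne_zero
  have hvd : Differentiable ℝ v := hv.differentiable one_ne_zero
  simp_rw [← Complex.real_smul]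
  rw [mul_assoc (eLpNorm _ 2 volume)]
  apply eLpNorm_le_mul_mul_add_mul_of_ae_enorm_le one_le_two
  · exact ((hu.sub hv).continuous_fderiv one_ne_zero |>.clm_apply continuous_const)
      |>.aestronglyMeasurable
  · exact (hv.continuous_fderiv one_ne_zero |>.clm_apply continuous_const).aestronglyMeasurable
  filter_upwards [enorm_ae_le_eLpNormEssSup u volume, enorm_ae_le_eLpNormEssSup v volume,
    enorm_ae_le_eLpNormEssSup (fun x ↦ u x - v x) volume] with x hux hvx huvx
  rw [(hud x).fderiv_norm_rpow_smul hp1, (hvd x).fderiv_norm_rpow_smul hp1,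
    fderiv_fun_sub (hud x) (hvd x), ContinuousLinearMap.comp_apply, ContinuousLinearMap.comp_apply,
    sub_apply]
  refine (enorm_normRpowSMulDeriv_apply_sub_apply_le hp1.le hp2 _ _ _ _).trans ?_
  rw [← mul_assoc, eLpNorm_exponent_top, eLpNorm_exponent_top, eLpNorm_exponent_top]
  gcongr
end

section
/- Let d ∈ {2,3}. There exists a constant C > 0 (depending only on d and the ambient dimension n) such that for every bounded, twice continuously differentiable function u : ℝⁿ → ℂ with bounded first and second derivatives, and all coordinate directions i, j: ‖∂_i∂_j(|u|^{4/d} u)‖_{L²(ℝⁿ)} ≤ C ( ‖∂_i∂_j u‖_{L²(ℝⁿ)} ‖u‖_{L^∞}^{4/d} + ‖∂_i u‖_{L⁴(ℝⁿ)} ‖∂_j u‖_{L⁴(ℝⁿ)} ‖u‖_{L^∞}^{4/d − 1} ), where the norms are allowed to be +∞. -/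
/-!
Write `F(z) = ‖z‖ ^ p • z` with `p = 4 / d > 1`. Its derivative is
`DF(z) = ‖z‖ ^ p • 1 + p ‖z‖ ^ (p - 2) • z ⊗ z`, of norm at most `(1 + p) ‖z‖ ^ p`. Away from `0`
the product rule bounds `‖D²F(z)‖` by `p (3 + |p - 2|) ‖z‖ ^ (p - 1)`; at `0`, `DF` is
`O(‖z‖ ^ p)` with `p > 1`, so `D²F(0) = 0`. By the chain rule
`∂ᵢ∂ⱼ F(u) = DF(u) ∂ᵢ∂ⱼu + D²F(u) (∂ᵢu, ∂ⱼu)`, so after bounding `‖u‖` by `‖u‖_∞` the estimate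
follows from the triangle inequality in `L²` and Hölder's inequality `L⁴ · L⁴ ⊆ L²`.
-/

open ContinuousLinearMap Topology Asymptotics InnerProductSpace MeasureTheory
open scoped ENNReal

section NormedSpace

variable {E G : Type*} [NormedAddCommGroup E] [NormedSpace ℝ E]
  [NormedAddCommGroup G] [NormedSpace ℝ G]

theorem norm_smul_add_smulRight_le (a : ℝ) (f' : E →L[ℝ] G) (c' : E →L[ℝ] ℝ) (v : G) :
    ‖a • f' + c'.smulRight v‖ ≤ |a| * ‖f'‖ + ‖c'‖ * ‖v‖ := by
  refine (norm_add_le _ _).trans_eq ?_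
  rw [norm_smul, norm_smulRight_apply, Real.norm_eq_abs]

theorem hasFDerivAt_zero_of_norm_le_rpow {f : E → G} {K p : ℝ} (hp : 1 < p)
    (hf : ∀ᶠ x in 𝓝 0, ‖f x‖ ≤ K * ‖x‖ ^ p) : HasFDerivAt f (0 : E →L[ℝ] G) 0 := by
  have hf0 : f 0 = 0 := by
    simpa [Real.zero_rpow (by linarith : p ≠ 0)] using hf.self_of_nhds
  refine .of_isLittleO ?_
  simp only [hf0, sub_zero, zero_apply]
  refine (IsBigO.of_bound K (g := fun x : E ↦ ‖x‖ ^ p) (hf.mono fun x hx ↦ ?_)).trans_isLittleO ?_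
  · simpa [abs_of_nonneg (Real.rpow_nonneg (norm_nonneg x) p)] using hx
  calc (fun x : E ↦ ‖x‖ ^ p)
      = (fun x : E ↦ ‖x‖ * ‖x‖ ^ (p - 1)) := by
        ext x
        rw [← Real.rpow_one_add' (norm_nonneg x) (by linarith)]
        ring_nf
    _ =o[𝓝 0] (fun x : E ↦ ‖x‖ * 1) := by
      refine (isBigO_refl _ _).mul_isLittleO <| (isLittleO_const_iff one_ne_zero).mpr ?_
      have h := (continuous_norm (E := E)).tendsto 0 |>.rpow_const (.inr (sub_pos.2 hp).le)
      rwa [norm_zero, Real.zero_rpow (sub_pos.2 hp).ne'] at h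
    _ =O[𝓝 0] (fun x : E ↦ x) := by
      simpa only [mul_one] using (isBigO_refl (fun x : E ↦ x) _).norm_left

end NormedSpace

section InnerProductSpace

variable {F : Type*} [NormedAddCommGroup F] [InnerProductSpace ℝ F]

theorem hasFDerivAt_norm_rpow_of_ne_zero {z : F} (hz : z ≠ 0) (q : ℝ) :
    HasFDerivAt (fun w : F ↦ ‖w‖ ^ q) ((q * ‖z‖ ^ (q - 2)) • innerSL ℝ z) z := by
  apply HasStrictFDerivAt.hasFDerivAt
  convert (hasStrictFDerivAt_norm_sq z).rpow_const (p := q / 2) (by simp [hz]) using 0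
  simp_rw [← Real.rpow_natCast_mul (norm_nonneg _), ← Nat.cast_smul_eq_nsmul ℝ, smul_smul]
  ring_nf

theorem norm_mul_rpow_smul_innerSL {z : F} (hz : z ≠ 0) (q : ℝ) :
    ‖(q * ‖z‖ ^ (q - 2)) • innerSL ℝ z‖ = |q| * ‖z‖ ^ (q - 1) := by
  have hz' : ‖z‖ ≠ 0 := norm_ne_zero_iff.2 hz
  rw [norm_smul, innerSL_apply_norm, Real.norm_eq_abs, abs_mul,
    abs_of_nonneg (Real.rpow_nonneg (norm_nonneg z) _), mul_assoc,
    show q - 2 = q - 1 - 1 by ring, Real.rpow_sub_one hz', div_mul_cancel₀ _ hz']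

theorem exists_hasFDerivAt_rankOne_self (z : F) :
    ∃ Q' : F →L[ℝ] F →L[ℝ] F, HasFDerivAt (fun w : F ↦ rankOne ℝ w w) Q' z ∧ ‖Q'‖ ≤ 2 * ‖z‖ := by
  let R : F →L[ℝ] F →L[ℝ] F →L[ℝ] F := rankOne ℝ
  refine ⟨_, R.hasFDerivAt.clm_apply (hasFDerivAt_id z),
    opNorm_le_bound _ (by positivity) fun h ↦ ?_⟩
  calc _ = ‖rankOne ℝ z h + rankOne ℝ h z‖ := rfl
    _ ≤ ‖z‖ * ‖h‖ + ‖h‖ * ‖z‖ := by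
      simpa only [norm_rankOne] using norm_add_le (rankOne ℝ z h) (rankOne ℝ h z)
    _ = 2 * ‖z‖ * ‖h‖ := by ring

noncomputable def normRpowSmulDeriv (p : ℝ) (z : F) : F →L[ℝ] F :=
  ‖z‖ ^ p • ContinuousLinearMap.id ℝ F + (p * ‖z‖ ^ (p - 2)) • rankOne ℝ z z

variable {p : ℝ}

theorem hasFDerivAt_norm_rpow_smul_s7 (hp : 1 < p) (z : F) :
    HasFDerivAt (fun w : F ↦ ‖w‖ ^ p • w) (normRpowSmulDeriv p z) z := by
  refine ((hasFDerivAt_norm_rpow z hp).smul (hasFDerivAt_id z)).congr_fderiv ?_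
  ext h
  simp [normRpowSmulDeriv, smul_smul]

theorem norm_normRpowSmulDeriv_le (hp : 0 < p) (z : F) :
    ‖normRpowSmulDeriv p z‖ ≤ (1 + p) * ‖z‖ ^ p := by
  have hsq : ‖z‖ ^ (p - 2) * (‖z‖ * ‖z‖) = ‖z‖ ^ p := by
    rw [← sq, ← Real.rpow_natCast, ← Real.rpow_add' (norm_nonneg _) (by simpa using hp.ne')]
    norm_num
  calc _ ≤ ‖‖z‖ ^ p • ContinuousLinearMap.id ℝ F‖ + ‖(p * ‖z‖ ^ (p - 2)) • rankOne ℝ z z‖ :=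
        norm_add_le _ _
    _ ≤ ‖z‖ ^ p * 1 + p * ‖z‖ ^ (p - 2) * (‖z‖ * ‖z‖) := by
        rw [norm_smul, norm_smul, norm_rankOne, Real.norm_of_nonneg (by positivity),
          Real.norm_of_nonneg (by positivity)]
        gcongr
        exact norm_id_le
    _ = (1 + p) * ‖z‖ ^ p := by rw [mul_assoc, hsq]; ring

theorem exists_hasFDerivAt_normRpowSmulDeriv_of_ne_zero {z : F} (hz : z ≠ 0) (p : ℝ) :
    ∃ Φ : F →L[ℝ] F →L[ℝ] F, HasFDerivAt (normRpowSmulDeriv p) Φ z ∧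
      ‖Φ‖ ≤ |p| * (3 + |p - 2|) * ‖z‖ ^ (p - 1) := by
  obtain ⟨Q', hQ', hQ'_le⟩ := exists_hasFDerivAt_rankOne_self z
  have hA := (hasFDerivAt_norm_rpow_of_ne_zero hz p).smul_const (ContinuousLinearMap.id ℝ F)
  have hB := ((hasFDerivAt_norm_rpow_of_ne_zero hz (p - 2)).const_mul p).smul hQ'
  refine ⟨_, hA.add hB, ?_⟩
  refine (norm_add_le (E := F →L[ℝ] F →L[ℝ] F) _ _).trans ?_
  have hz' : 0 < ‖z‖ := norm_pos_iff.2 hz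
  have e₁ : ‖z‖ ^ (p - 2) = ‖z‖ ^ (p - 1) / ‖z‖ := by
    rw [← Real.rpow_sub_one hz'.ne']; ring_nf
  have e₂ : ‖z‖ ^ (p - 2 - 1) = ‖z‖ ^ (p - 1) / ‖z‖ / ‖z‖ := by
    rw [Real.rpow_sub_one hz'.ne', e₁]
  calc _ ≤ |p| * ‖z‖ ^ (p - 1) * 1 + (|p * ‖z‖ ^ (p - 2)| * (2 * ‖z‖) +
          |p| * (|p - 2| * ‖z‖ ^ (p - 2 - 1)) * (‖z‖ * ‖z‖)) := by
        gcongr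
        · rw [norm_smulRight_apply, norm_mul_rpow_smul_innerSL hz]
          gcongr
          exact norm_id_le
        · refine (norm_smul_add_smulRight_le _ _ _ _).trans ?_
          rw [norm_smul, norm_mul_rpow_smul_innerSL hz, norm_rankOne, Real.norm_eq_abs]
          gcongr
    _ = |p| * (3 + |p - 2|) * ‖z‖ ^ (p - 1) := by
        rw [abs_mul, abs_of_pos (Real.rpow_pos_of_pos hz' _), e₁, e₂]
        field_simp
        ring

theorem exists_hasFDerivAt_normRpowSmulDeriv (hp : 1 < p) (z : F) :
    ∃ Φ : F →L[ℝ] F →L[ℝ] F, HasFDerivAt (normRpowSmulDeriv p) Φ z ∧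
      ‖Φ‖ ≤ |p| * (3 + |p - 2|) * ‖z‖ ^ (p - 1) := by
  rcases eq_or_ne z 0 with rfl | hz
  · refine ⟨0, hasFDerivAt_zero_of_norm_le_rpow hp
      (.of_forall (norm_normRpowSmulDeriv_le (by linarith))), ?_⟩
    exact (norm_zero (E := F →L[ℝ] F →L[ℝ] F)).trans_le (by positivity)
  · exact exists_hasFDerivAt_normRpowSmulDeriv_of_ne_zero hz p

variable {E : Type*} [NormedAddCommGroup E] [NormedSpace ℝ E]

theorem norm_fderiv_fderiv_norm_rpow_smul_comp_le (hp : 1 < p) {u : E → F}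
    (hu : Differentiable ℝ u) {x v w : E} (huw : DifferentiableAt ℝ (fun y ↦ fderiv ℝ u y w) x) :
    ‖fderiv ℝ (fun y ↦ fderiv ℝ (fun z ↦ ‖u z‖ ^ p • u z) y w) x v‖ ≤
      (1 + p) * ‖u x‖ ^ p * ‖fderiv ℝ (fun y ↦ fderiv ℝ u y w) x v‖ +
        |p| * (3 + |p - 2|) * ‖u x‖ ^ (p - 1) * (‖fderiv ℝ u x v‖ * ‖fderiv ℝ u x w‖) := by
  have hchain : (fun y ↦ fderiv ℝ (fun z ↦ ‖u z‖ ^ p • u z) y w) =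
      fun y ↦ normRpowSmulDeriv p (u y) (fderiv ℝ u y w) := funext fun y ↦ by
    have h : HasFDerivAt (fun z ↦ ‖u z‖ ^ p • u z) _ y :=
      (hasFDerivAt_norm_rpow_smul_s7 hp (u y)).comp y (hu y).hasFDerivAt
    rw [h.fderiv]
    rfl
  obtain ⟨Φ, hΦ, hΦ_le⟩ := exists_hasFDerivAt_normRpowSmulDeriv hp (u x)
  have hD : HasFDerivAt (fun y ↦ normRpowSmulDeriv p (u y) (fderiv ℝ u y w)) _ x :=
    (hΦ.comp x (hu x).hasFDerivAt).clm_apply huw.hasFDerivAt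
  rw [hchain, hD.fderiv]
  simp only [add_apply, comp_apply, flip_apply]
  refine (norm_add_le _ _).trans (add_le_add ?_ ?_)
  · calc _ ≤ ‖normRpowSmulDeriv p (u x)‖ * ‖fderiv ℝ (fun y ↦ fderiv ℝ u y w) x v‖ :=
          le_opNorm _ _
      _ ≤ _ := by gcongr; exact norm_normRpowSmulDeriv_le (by linarith) _
  · calc _ ≤ ‖Φ‖ * ‖fderiv ℝ u x v‖ * ‖fderiv ℝ u x w‖ := le_opNorm₂ _ _ _
      _ ≤ _ := by rw [mul_assoc _ ‖fderiv ℝ u x v‖]; gcongr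

end InnerProductSpace

section Lp

variable {α E G H₁ H₂ : Type*} [MeasurableSpace α] {μ : Measure α} [NormedAddCommGroup E]
  [NormedAddCommGroup G] [NormedAddCommGroup H₁] [NormedAddCommGroup H₂]

theorem ae_norm_le_toReal_eLpNorm_top {f : α → E} (hf : eLpNorm f ∞ μ ≠ ∞) :
    ∀ᵐ x ∂μ, ‖f x‖ ≤ (eLpNorm f ∞ μ).toReal := by
  filter_upwards [ae_le_eLpNormEssSup (f := f) (μ := μ)] with x hx
  rw [eLpNorm_exponent_top] at hf ⊢
  simpa using ENNReal.toReal_mono hf hx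

theorem eLpNorm_le_of_norm_le_add_mul {p q r : ℝ≥0∞} [p.HolderTriple q r] (hr : 1 ≤ r)
    {f : α → E} {g : α → G} {h₁ : α → H₁} {h₂ : α → H₂} (hg : AEStronglyMeasurable g μ)
    (hh₁ : AEStronglyMeasurable h₁ μ) (hh₂ : AEStronglyMeasurable h₂ μ) {a b : ℝ} (ha : 0 ≤ a)
    (hb : 0 ≤ b) (hf : ∀ᵐ x ∂μ, ‖f x‖ ≤ a * ‖g x‖ + b * (‖h₁ x‖ * ‖h₂ x‖)) :
    eLpNorm f r μ ≤
      ENNReal.ofReal a * eLpNorm g r μ + ENNReal.ofReal b * (eLpNorm h₁ p μ * eLpNorm h₂ q μ) := by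
  calc eLpNorm f r μ
      ≤ eLpNorm ((fun x ↦ a * ‖g x‖) + fun x ↦ b * (‖h₁ x‖ * ‖h₂ x‖)) r μ :=
        eLpNorm_mono_ae_real hf
    _ ≤ eLpNorm (fun x ↦ a * ‖g x‖) r μ + eLpNorm (fun x ↦ b * (‖h₁ x‖ * ‖h₂ x‖)) r μ :=
        eLpNorm_add_le (hg.norm.const_mul a) ((hh₁.norm.mul hh₂.norm).const_mul b) hr
    _ ≤ _ := by
        gcongr
        · exact eLpNorm_le_mul_eLpNorm_of_ae_le_mul
            (.of_forall fun x ↦ by rw [norm_mul, norm_norm, Real.norm_of_nonneg ha]) r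
        · rw [← mul_assoc]
          refine eLpNorm_le_eLpNorm_mul_eLpNorm'_of_norm hh₁ hh₂ (fun y z ↦ b * (‖y‖ * ‖z‖))
            b.toNNReal (.of_forall fun x ↦ ?_)
          rw [Real.coe_toNNReal b hb, norm_mul, norm_mul, norm_norm, norm_norm,
            Real.norm_of_nonneg hb, mul_assoc]

instance ENNReal.holderTriple_four_four_two : ENNReal.HolderTriple 4 4 2 := ⟨by
  rw [show (4 : ℝ≥0∞) = 2 * 2 by norm_num, ENNReal.mul_inv (by simp) (by simp),
    ← div_eq_mul_inv, ENNReal.add_halves]⟩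

end Lp

/-- Second-derivative estimate underlying part (iii) of the nonlinear estimates lemma: for
`d ∈ {2,3}` there is `C > 0` (depending only on `d` and `n`) such that for every bounded `C²`
function `u : ℝⁿ → ℂ` with bounded first and second derivatives and all coordinate directions
`i, j`,
`‖∂ᵢ∂ⱼ(|u|^{4/d}u)‖_{L²} ≤ C ( ‖∂ᵢ∂ⱼu‖_{L²} ‖u‖_∞^{4/d}
  + ‖∂ᵢu‖_{L⁴} ‖∂ⱼu‖_{L⁴} ‖u‖_∞^{4/d−1} )`. -/
theorem critical_nonlinearity_second_derivative_estimate (d n : ℕ) (hd : d = 2 ∨ d = 3) :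
    ∃ C : ℝ, 0 < C ∧ ∀ u : EuclideanSpace ℝ (Fin n) → ℂ,
      ContDiff ℝ 2 u →
      (∃ M : ℝ, ∀ x, ‖u x‖ ≤ M ∧ ‖fderiv ℝ u x‖ ≤ M ∧ ‖fderiv ℝ (fderiv ℝ u) x‖ ≤ M) →
      ∀ i j : Fin n,
      eLpNorm (fun x =>
          fderiv ℝ (fun y =>
              fderiv ℝ (fun z => ((‖u z‖ ^ ((4 : ℝ) / d) : ℝ) : ℂ) * u z) y
                (EuclideanSpace.single j 1)) x (EuclideanSpace.single i 1)) 2 volume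
        ≤ ENNReal.ofReal C *
          (eLpNorm (fun x =>
              fderiv ℝ (fun y => fderiv ℝ u y (EuclideanSpace.single j 1)) x
                (EuclideanSpace.single i 1)) 2 volume
              * (eLpNorm u ⊤ volume) ^ ((4 : ℝ) / d)
            + eLpNorm (fun x => fderiv ℝ u x (EuclideanSpace.single i 1)) 4 volume
              * eLpNorm (fun x => fderiv ℝ u x (EuclideanSpace.single j 1)) 4 volume
              * (eLpNorm u ⊤ volume) ^ ((4 : ℝ) / d - 1)) := by
  have hp : 1 < (4 : ℝ) / d := by rcases hd with rfl | rfl <;> norm_num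
  set p : ℝ := 4 / d
  set C := max (1 + p) (|p| * (3 + |p - 2|))
  refine ⟨C, by positivity, fun u hu ⟨M, hM⟩ i j ↦ ?_⟩
  have hN : eLpNorm u ⊤ volume ≠ ⊤ := (memLp_top_of_bound hu.continuous.aestronglyMeasurable M
    (.of_forall fun x ↦ (hM x).1)).eLpNorm_ne_top
  set K := (eLpNorm u ⊤ volume).toReal
  set eᵢ : EuclideanSpace ℝ (Fin n) := EuclideanSpace.single i 1
  set eⱼ : EuclideanSpace ℝ (Fin n) := EuclideanSpace.single j 1
  have hDu : ∀ e, ContDiff ℝ 1 (fun y ↦ fderiv ℝ u y e) :=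
    fun e ↦ (hu.fderiv_right le_rfl).clm_apply contDiff_const
  simp_rw [← Complex.real_smul]
  refine (eLpNorm_le_of_norm_le_add_mul (p := 4) (q := 4) (a := C * K ^ p) (b := C * K ^ (p - 1))
    (g := fun x ↦ fderiv ℝ (fun y ↦ fderiv ℝ u y eⱼ) x eᵢ) (h₁ := fun x ↦ fderiv ℝ u x eᵢ)
    (h₂ := fun x ↦ fderiv ℝ u x eⱼ) one_le_two
    (((hDu _).continuous_fderiv one_ne_zero).clm_apply continuous_const).aestronglyMeasurable
    (hDu _).continuous.aestronglyMeasurable (hDu _).continuous.aestronglyMeasurable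
    (by positivity) (by positivity) ?_).trans_eq ?_
  · filter_upwards [ae_norm_le_toReal_eLpNorm_top hN] with x hx
    refine (norm_fderiv_fderiv_norm_rpow_smul_comp_le hp (hu.differentiable two_ne_zero)
      ((hDu _).differentiable one_ne_zero x)).trans ?_
    gcongr
    exacts [le_max_left _ _, le_max_right _ _]
  · rw [ENNReal.ofReal_mul (by positivity), ENNReal.ofReal_mul (by positivity),
      ← ENNReal.ofReal_rpow_of_nonneg ENNReal.toReal_nonneg (by linarith),
      ← ENNReal.ofReal_rpow_of_nonneg ENNReal.toReal_nonneg (by linarith),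
      ENNReal.ofReal_toReal hN]
    ring
end

section
/- For all real numbers γ > 0, λ ≥ 1 and all real t, T with 0 ≤ t < T: ∫_t^T e^{−γ/(λ(T − s))} ( λ² + λ^{-2}(T − s)^{-2} ) ds ≤ e^{−γ/(λ(T − t))} ( λ² (T − t) + 1/(λ γ) ). -/
/-!
After the substitution `u = T - s` and with `c = γ / λ`, the integrand is
`λ² e^{-c/u} + λ⁻² e^{-c/u} / u²`. The first summand is increasing in `u`, so it is at most
`λ² e^{-c/(T-t)}`; the second is the exact derivative of `e^{-c/u} / c`, which tends to `0` as
`u → 0⁺`, so its integral over `(0, T - t)` is `e^{-c/(T-t)} / c = e^{-c/(T-t)} · λ / γ`.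
-/

open Real Set MeasureTheory intervalIntegral

lemma exp_neg_div_eq_expNegInvGlue {c u : ℝ} (hc : 0 < c) (hu : 0 < u) :
    exp (-c / u) = expNegInvGlue (u / c) := by
  rw [expNegInvGlue, if_neg (div_pos hu hc).not_ge, inv_div, neg_div]

lemma monotoneOn_exp_neg_div {c : ℝ} (hc : 0 ≤ c) :
    MonotoneOn (fun u ↦ exp (-c / u)) (Ioi 0) := by
  intro u hu v hv huv
  simp only [neg_div, exp_le_exp, neg_le_neg_iff]
  exact div_le_div_of_nonneg_left hc hu huv

lemma hasDerivAt_exp_neg_div (c : ℝ) {u : ℝ} (hu : u ≠ 0) :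
    HasDerivAt (fun u ↦ exp (-c / u)) (c * exp (-c / u) / u ^ 2) u := by
  convert ((hasDerivAt_inv hu).const_mul (-c)).exp using 1
  · simp [div_eq_mul_inv]
  · simp only [div_eq_mul_inv, neg_mul, mul_neg, neg_neg]; ring

-- `expNegInvGlue (u / c) / c` is the antiderivative `e^{-c/u} / c`, extended continuously by `0`
-- at `u = 0` (where `exp (-c / 0) = 1`).
lemma continuous_expNegInvGlue_div_div (c : ℝ) :
    Continuous (fun u ↦ expNegInvGlue (u / c) / c) :=
  ((expNegInvGlue.contDiff (n := 0)).continuous.comp (continuous_id.div_const c)).div_const c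

lemma hasDerivAt_expNegInvGlue_div_div {c u : ℝ} (hc : 0 < c) (hu : 0 < u) :
    HasDerivAt (fun u ↦ expNegInvGlue (u / c) / c) (exp (-c / u) / u ^ 2) u := by
  have hderiv := (hasDerivAt_exp_neg_div c hu.ne').div_const c
  rw [mul_div_assoc, mul_div_cancel_left₀ _ hc.ne'] at hderiv
  refine hderiv.congr_of_eventuallyEq ?_
  filter_upwards [Ioi_mem_nhds hu] with v hv
  rw [exp_neg_div_eq_expNegInvGlue hc hv]

lemma intervalIntegrable_exp_neg_div_div_sq {c x : ℝ} (hc : 0 < c) (hx : 0 ≤ x) :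
    IntervalIntegrable (fun u ↦ exp (-c / u) / u ^ 2) volume 0 x := by
  refine intervalIntegrable_deriv_of_nonneg (g := fun u ↦ expNegInvGlue (u / c) / c)
    (continuous_expNegInvGlue_div_div c).continuousOn (fun u hu ↦ ?_) (fun u _ ↦ by positivity)
  rw [min_eq_left hx] at hu
  exact hasDerivAt_expNegInvGlue_div_div hc hu.1

lemma integral_exp_neg_div_div_sq {c x : ℝ} (hc : 0 < c) (hx : 0 < x) :
    ∫ u in 0..x, exp (-c / u) / u ^ 2 = exp (-c / x) / c := by
  rw [integral_eq_sub_of_hasDerivAt_of_le hx.le (f := fun u ↦ expNegInvGlue (u / c) / c)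
    (continuous_expNegInvGlue_div_div c).continuousOn
    (fun u hu ↦ hasDerivAt_expNegInvGlue_div_div hc hu.1)
    (intervalIntegrable_exp_neg_div_div_sq hc hx.le)]
  simp [exp_neg_div_eq_expNegInvGlue hc hx]

lemma intervalIntegral.integral_mono_on_of_nonneg {f g : ℝ → ℝ} {a b : ℝ} (hab : a ≤ b)
    (hg : IntervalIntegrable g volume a b) (hf : ∀ x ∈ Ioc a b, 0 ≤ f x)
    (hfg : ∀ x ∈ Ioc a b, f x ≤ g x) :
    ∫ x in a..b, f x ≤ ∫ x in a..b, g x := by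
  rw [integral_of_le hab, integral_of_le hab]
  exact integral_mono_of_nonneg (ae_restrict_of_forall_mem measurableSet_Ioc hf)
    hg.1 (ae_restrict_of_forall_mem measurableSet_Ioc hfg)

theorem integral_exp_mul_le_general (γ lam t T : ℝ) (hγ : 0 < γ) (hlam : 1 ≤ lam)
    (htT : t < T) :
    (∫ s in t..T,
        Real.exp (-γ / (lam * (T - s))) * (lam ^ 2 + 1 / (lam ^ 2 * (T - s) ^ 2)))
      ≤ Real.exp (-γ / (lam * (T - t))) * (lam ^ 2 * (T - t) + 1 / (lam * γ)) := by
  have hlam0 : 0 < lam := one_pos.trans_le hlam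
  have hx : 0 < T - t := sub_pos.mpr htT
  rw [integral_comp_sub_left (fun u ↦ exp (-γ / (lam * u)) * (lam ^ 2 + 1 / (lam ^ 2 * u ^ 2))),
    sub_self]
  simp only [div_mul_eq_div_div (-γ), neg_div lam γ]
  set c := γ / lam with hc_def
  have hc : 0 < c := div_pos hγ hlam0
  have hint := (intervalIntegrable_exp_neg_div_div_sq hc hx.le).const_mul (lam ^ 2)⁻¹
  calc ∫ u in 0..T - t, exp (-c / u) * (lam ^ 2 + 1 / (lam ^ 2 * u ^ 2))
      ≤ ∫ u in 0..T - t,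
          (lam ^ 2 * exp (-c / (T - t)) + (lam ^ 2)⁻¹ * (exp (-c / u) / u ^ 2)) := by
        refine integral_mono_on_of_nonneg hx.le (intervalIntegrable_const.add hint)
          (fun u _ ↦ by positivity) (fun u hu ↦ ?_)
        have hmono : exp (-c / u) ≤ exp (-c / (T - t)) :=
          monotoneOn_exp_neg_div hc.le hu.1 hx hu.2
        calc _ = lam ^ 2 * exp (-c / u) + (lam ^ 2)⁻¹ * (exp (-c / u) / u ^ 2) := by ring
          _ ≤ _ := by gcongr
    _ = lam ^ 2 * exp (-c / (T - t)) * (T - t) + (lam ^ 2)⁻¹ * (exp (-c / (T - t)) / c) := by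
        rw [integral_add intervalIntegrable_const hint, intervalIntegral.integral_const,
          intervalIntegral.integral_const_mul, integral_exp_neg_div_div_sq hc hx, sub_zero,
          smul_eq_mul, mul_comm (T - t)]
    _ = exp (-c / (T - t)) * (lam ^ 2 * (T - t) + 1 / (lam * γ)) := by
        rw [hc_def]
        field_simp

/-- For `γ > 0`, `λ ≥ 1` and `0 ≤ t < T`,
`∫_t^T e^{−γ/(λ(T − s))} (λ² + λ⁻²(T − s)⁻²) ds
  ≤ e^{−γ/(λ(T − t))} (λ² (T − t) + 1/(λγ))`. -/
theorem integral_exp_mul_le (γ lam t T : ℝ) (hγ : 0 < γ) (hlam : 1 ≤ lam)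
    (ht : 0 ≤ t) (htT : t < T) :
    (∫ s in t..T,
        Real.exp (-γ / (lam * (T - s))) * (lam ^ 2 + 1 / (lam ^ 2 * (T - s) ^ 2)))
      ≤ Real.exp (-γ / (lam * (T - t))) * (lam ^ 2 * (T - t) + 1 / (lam * γ)) :=
  integral_exp_mul_le_general γ lam t T hγ hlam htT
end

section
/- Let d ≥ 1 and let g : ℝ^d → ℝ be measurable with |g(x)| ≤ C e^{−D|x|} for all x ∈ ℝ^d, for some constants C, D > 0. Then for every r > 0 there exist constants C' > 0 and D' > 0 (depending only on C, D, d, r) such that for all s ∈ (0, 1]: ( ∫_{{|x| ≥ r}} s^{-d} g(x/s)² dx )^{1/2} ≤ C' e^{−D'/s}. -/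
open MeasureTheory

lemma aux_pow_le_exp (n : ℕ) (a t : ℝ) (ha : 0 < a) (ht : 0 ≤ t) (hn : 0 < n) :
    t ^ n ≤ (n / a) ^ n * Real.exp (a * t) := by
  have hn' : (0:ℝ) < n := by exact_mod_cast hn
  have h1 : a * t / n ≤ Real.exp (a * t / n) := by
    have := Real.add_one_le_exp (a * t / n)
    linarith
  have h2 : t ≤ n / a * Real.exp (a * t / n) := by
    have := mul_le_mul_of_nonneg_left h1 (le_of_lt (div_pos hn' ha))
    calc t = n / a * (a * t / n) := by field_simp
    _ ≤ n / a * Real.exp (a * t / n) := this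
  calc t ^ n ≤ (n / a * Real.exp (a * t / n)) ^ n := pow_le_pow_left₀ ht h2 n
    _ = (n / a) ^ n * Real.exp (a * t / n) ^ n := mul_pow _ _ _
    _ = (n / a) ^ n * Real.exp (a * t) := by
        rw [← Real.exp_nat_mul]
        congr 1
        field_simp

lemma aux_integrable_exp (d : ℕ) (D : ℝ) (hD : 0 < D) :
    Integrable (fun x : EuclideanSpace ℝ (Fin d) => Real.exp (-D * ‖x‖)) := by
  have hnr : (Module.finrank ℝ (EuclideanSpace ℝ (Fin d)) : ℝ) < (d + 1 : ℕ) := by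
    rw [finrank_euclideanSpace_fin]; push_cast; linarith
  have h := integrable_one_add_norm (E := EuclideanSpace ℝ (Fin d)) (μ := volume)
      (r := (d + 1 : ℕ)) hnr
  set K : ℝ := ((d + 1 : ℕ) / D) ^ (d + 1) * Real.exp D with hK
  have hK0 : 0 ≤ K := by positivity
  apply Integrable.mono' (h.const_mul K)
  · exact (Real.measurable_exp.comp ((measurable_norm).const_mul (-D))).aestronglyMeasurable
  · filter_upwards with x
    have hx : (0:ℝ) ≤ ‖x‖ := norm_nonneg x
    have h1x : (0:ℝ) < 1 + ‖x‖ := by linarith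
    have key : (1 + ‖x‖) ^ (d + 1) ≤ K * Real.exp (D * ‖x‖) := by
      have := aux_pow_le_exp (d + 1) D (1 + ‖x‖) hD (by linarith) (Nat.succ_pos d)
      calc (1 + ‖x‖) ^ (d + 1) ≤ ((d + 1 : ℕ) / D) ^ (d + 1) * Real.exp (D * (1 + ‖x‖)) := this
        _ = K * Real.exp (D * ‖x‖) := by
            rw [hK, mul_assoc, ← Real.exp_add]; ring_nf
    rw [Real.norm_eq_abs, abs_of_nonneg (Real.exp_nonneg _)]
    have hrp : ((1:ℝ) + ‖x‖) ^ (-((d:ℝ) + 1)) = ((1 + ‖x‖) ^ (d + 1))⁻¹ := by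
      rw [← Real.rpow_natCast (1 + ‖x‖) (d + 1), ← Real.rpow_neg h1x.le]
      norm_num
    have hexp : Real.exp (-D * ‖x‖) = (Real.exp (D * ‖x‖))⁻¹ := by
      rw [← Real.exp_neg]; ring_nf
    have hKexp : 0 < Real.exp (D * ‖x‖) := Real.exp_pos _
    have : Real.exp (-D * ‖x‖) * (1 + ‖x‖) ^ (d + 1) ≤ K := by
      rw [hexp]
      calc (Real.exp (D * ‖x‖))⁻¹ * (1 + ‖x‖) ^ (d + 1)
          ≤ (Real.exp (D * ‖x‖))⁻¹ * (K * Real.exp (D * ‖x‖)) := by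
            apply mul_le_mul_of_nonneg_left key (by positivity)
        _ = K := by field_simp
    have hpow : (0:ℝ) < (1 + ‖x‖) ^ (d + 1) := by positivity
    calc Real.exp (-D * ‖x‖) = Real.exp (-D * ‖x‖) * (1 + ‖x‖) ^ (d + 1) / (1 + ‖x‖) ^ (d + 1) :=
          by field_simp
      _ ≤ K / (1 + ‖x‖) ^ (d + 1) := by
          apply div_le_div_of_nonneg_right this hpow.le |>.trans_eq rfl
      _ = K * (1 + ‖x‖) ^ (-((d:ℝ) + 1)) := by rw [hrp]; ring
      _ = K * (1 + ‖x‖) ^ (-((d + 1 : ℕ) : ℝ)) := by norm_num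

/-- If `g : ℝ^d → ℝ` is measurable with `|g(x)| ≤ C e^{−D|x|}`, then for every `r > 0` the `L²`
mass of the rescaled profile `s^{−d/2} g(·/s)` outside the ball of radius `r` is exponentially
small in `1/s`: there are `C', D' > 0` with
`(∫_{|x| ≥ r} s^{−d} g(x/s)² dx)^{1/2} ≤ C' e^{−D'/s}` for all `s ∈ (0,1]`. -/
theorem rescaled_profile_tail_exponentially_small (d : ℕ) (hd : 1 ≤ d)
    (g : EuclideanSpace ℝ (Fin d) → ℝ) (hg : Measurable g)
    (C D : ℝ) (hC : 0 < C) (hD : 0 < D)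
    (hdecay : ∀ x, |g x| ≤ C * Real.exp (-D * ‖x‖)) (r : ℝ) (hr : 0 < r) :
    ∃ C' D' : ℝ, 0 < C' ∧ 0 < D' ∧ ∀ s : ℝ, 0 < s → s ≤ 1 →
      Real.sqrt (∫ x in {x : EuclideanSpace ℝ (Fin d) | r ≤ ‖x‖},
          (s ^ d)⁻¹ * g (s⁻¹ • x) ^ 2)
        ≤ C' * Real.exp (-D' / s) := by
  have hI : Integrable (fun x : EuclideanSpace ℝ (Fin d) => Real.exp (-D * ‖x‖)) :=
    aux_integrable_exp d D hD
  set I : ℝ := ∫ x : EuclideanSpace ℝ (Fin d), Real.exp (-D * ‖x‖) with hIdef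
  have hI0 : 0 ≤ I := integral_nonneg fun x => (Real.exp_nonneg _)
  set K : ℝ := (2 * d / (D * r)) ^ d * (C ^ 2 * I) with hKdef
  have hK0 : 0 ≤ K := by positivity
  refine ⟨Real.sqrt K + 1, D * r / 4, by positivity, by positivity, ?_⟩
  intro s hs0 hs1
  set S : Set (EuclideanSpace ℝ (Fin d)) := {x | r ≤ ‖x‖} with hSdef
  have hS : MeasurableSet S := (isClosed_le continuous_const continuous_norm).measurableSet
  have hspow : (0:ℝ) < s ^ d := by positivity
  -- pointwise bound on S
  have hpt : ∀ x ∈ S, (s ^ d)⁻¹ * g (s⁻¹ • x) ^ 2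
      ≤ (s ^ d)⁻¹ * (C ^ 2 * Real.exp (-(D * r) / s)) * Real.exp (-D * ‖x‖) := by
    intro x hx
    have hxr : r ≤ ‖x‖ := hx
    have hns : ‖s⁻¹ • x‖ = s⁻¹ * ‖x‖ := by
      rw [norm_smul, Real.norm_eq_abs, abs_of_pos (inv_pos.mpr hs0)]
    have hg2 : g (s⁻¹ • x) ^ 2 ≤ C ^ 2 * Real.exp (-D * (s⁻¹ * ‖x‖)) ^ 2 := by
      have h := hdecay (s⁻¹ • x)
      rw [hns] at h
      have := sq_abs (g (s⁻¹ • x))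
      nlinarith [abs_nonneg (g (s⁻¹ • x)), Real.exp_nonneg (-D * (s⁻¹ * ‖x‖)),
        mul_pos hC (Real.exp_pos (-D * (s⁻¹ * ‖x‖)))]
    have hexp2 : Real.exp (-D * (s⁻¹ * ‖x‖)) ^ 2
        ≤ Real.exp (-(D * r) / s) * Real.exp (-D * ‖x‖) := by
      rw [← Real.exp_nat_mul, ← Real.exp_add]
      apply Real.exp_le_exp.mpr
      have h1 : D * r / s ≤ D * ‖x‖ / s := by
        apply div_le_div_of_nonneg_right _ hs0.le
        nlinarith
      have h2 : D * ‖x‖ ≤ D * ‖x‖ / s := by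
        rw [le_div_iff₀ hs0]
        nlinarith [norm_nonneg x, mul_le_mul_of_nonneg_left hs1 (mul_nonneg hD.le (norm_nonneg x))]
      have : ((2:ℕ):ℝ) * (-D * (s⁻¹ * ‖x‖)) = -(D * ‖x‖ / s) - D * ‖x‖ / s := by
        push_cast; field_simp; ring
      rw [this]
      have : -(D * r) / s + -D * ‖x‖ = -(D * r / s) - D * ‖x‖ := by ring
      rw [this]
      linarith
    calc (s ^ d)⁻¹ * g (s⁻¹ • x) ^ 2
        ≤ (s ^ d)⁻¹ * (C ^ 2 * (Real.exp (-(D * r) / s) * Real.exp (-D * ‖x‖))) := by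
          apply mul_le_mul_of_nonneg_left _ (by positivity)
          calc g (s⁻¹ • x) ^ 2 ≤ C ^ 2 * Real.exp (-D * (s⁻¹ * ‖x‖)) ^ 2 := hg2
            _ ≤ C ^ 2 * (Real.exp (-(D * r) / s) * Real.exp (-D * ‖x‖)) := by
                apply mul_le_mul_of_nonneg_left hexp2 (by positivity)
      _ = (s ^ d)⁻¹ * (C ^ 2 * Real.exp (-(D * r) / s)) * Real.exp (-D * ‖x‖) := by ring
  -- the dominating function
  set A : ℝ := (s ^ d)⁻¹ * (C ^ 2 * Real.exp (-(D * r) / s)) with hAdef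
  have hA0 : 0 ≤ A := by positivity
  have hdom : Integrable (fun x : EuclideanSpace ℝ (Fin d) => A * Real.exp (-D * ‖x‖)) :=
    hI.const_mul A
  -- measurability of the integrand
  have hfm : Measurable (fun x : EuclideanSpace ℝ (Fin d) => (s ^ d)⁻¹ * g (s⁻¹ • x) ^ 2) :=
    (((hg.comp (measurable_const_smul s⁻¹)).pow_const 2).const_mul _)
  have hfnonneg : ∀ x, 0 ≤ (s ^ d)⁻¹ * g (s⁻¹ • x) ^ 2 := fun x => by positivity
  -- integrability on S
  have hfi : IntegrableOn (fun x => (s ^ d)⁻¹ * g (s⁻¹ • x) ^ 2) S := by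
    apply Integrable.mono' (hdom.restrict (s := S)) hfm.aestronglyMeasurable
    rw [ae_restrict_iff' hS]
    filter_upwards with x hx
    rw [Real.norm_eq_abs, abs_of_nonneg (hfnonneg x)]
    exact hpt x hx
  -- bound the integral
  have hint : (∫ x in S, (s ^ d)⁻¹ * g (s⁻¹ • x) ^ 2) ≤ A * I := by
    calc (∫ x in S, (s ^ d)⁻¹ * g (s⁻¹ • x) ^ 2)
        ≤ ∫ x in S, A * Real.exp (-D * ‖x‖) := by
          apply setIntegral_mono_on hfi (hdom.restrict (s := S)) hS
          intro x hx
          exact hpt x hx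
      _ ≤ ∫ x, A * Real.exp (-D * ‖x‖) := by
          apply setIntegral_le_integral hdom
          filter_upwards with x
          positivity
      _ = A * I := by rw [integral_const_mul]
  -- combine with the s-power bound
  have hAI : A * I ≤ K * Real.exp (-(D * r) / (2 * s)) := by
    have hpow : (s ^ d)⁻¹ * Real.exp (-(D * r) / s)
        ≤ (2 * d / (D * r)) ^ d * Real.exp (-(D * r) / (2 * s)) := by
      have ht : (0:ℝ) ≤ s⁻¹ := by positivity
      have h := aux_pow_le_exp d (D * r / 2) s⁻¹ (by positivity) ht hd
      have hinv : (s ^ d)⁻¹ = (s⁻¹) ^ d := by rw [inv_pow]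
      have hda : ((d:ℝ) / (D * r / 2)) = 2 * d / (D * r) := by
        field_simp
      rw [hinv, ← hda]
      calc (s⁻¹) ^ d * Real.exp (-(D * r) / s)
          ≤ ((d:ℝ) / (D * r / 2)) ^ d * Real.exp (D * r / 2 * s⁻¹) * Real.exp (-(D * r) / s) := by
            apply mul_le_mul_of_nonneg_right h (Real.exp_nonneg _)
        _ = ((d:ℝ) / (D * r / 2)) ^ d * Real.exp (-(D * r) / (2 * s)) := by
            rw [mul_assoc, ← Real.exp_add]
            congr 2
            field_simp
            ring
    calc A * I = ((s ^ d)⁻¹ * Real.exp (-(D * r) / s)) * (C ^ 2 * I) := by rw [hAdef]; ring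
      _ ≤ ((2 * d / (D * r)) ^ d * Real.exp (-(D * r) / (2 * s))) * (C ^ 2 * I) := by
          apply mul_le_mul_of_nonneg_right hpow (by positivity)
      _ = K * Real.exp (-(D * r) / (2 * s)) := by rw [hKdef]; ring
  -- take square roots
  have hsqrt : Real.sqrt (∫ x in S, (s ^ d)⁻¹ * g (s⁻¹ • x) ^ 2)
      ≤ Real.sqrt (K * Real.exp (-(D * r) / (2 * s))) :=
    Real.sqrt_le_sqrt (hint.trans hAI)
  have heq : Real.sqrt (K * Real.exp (-(D * r) / (2 * s)))
      = Real.sqrt K * Real.exp (-(D * r / 4) / s) := by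
    rw [Real.sqrt_mul hK0, ← Real.exp_half]
    congr 1
    field_simp
    ring
  calc Real.sqrt (∫ x in S, (s ^ d)⁻¹ * g (s⁻¹ • x) ^ 2)
      ≤ Real.sqrt K * Real.exp (-(D * r / 4) / s) := by rw [← heq]; exact hsqrt
    _ ≤ (Real.sqrt K + 1) * Real.exp (-(D * r / 4) / s) := by
        apply mul_le_mul_of_nonneg_right _ (Real.exp_nonneg _)
        linarith
    _ = (Real.sqrt K + 1) * Real.exp (-(D * r / 4) / s) := rfl
end
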